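/- Assume in addition that ν is finite and nonzero. Then Φ is differentiable on the interval J := (max(p̲, −1), ∞), the equation Φ(q) = (q+1)Φ′(q) has a unique solution p̄ in J, this solution satisfies p̄ > 0, and for every q ∈ J one has Φ(q) − (q+1)Φ′(q) < 0 if and only if q < p̄. -/

import Mathlib

open MeasureTheory Real Set Filter

noncomputable section

/-- Real power with the convention `0 ^ r = 0` for every exponent `r`. -/
def pw (x r : ℝ) : ℝ := if x = 0 then 0 else x ^ r

/-- The state space `S` of ranked mass configurations: nonincreasing nonnegative
sequences with total sum at most `1` (sum condition stated via partial sums). -/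
def inS (s : ℕ → ℝ) : Prop :=
  (∀ i, 0 ≤ s i) ∧ (∀ i, s (i + 1) ≤ s i) ∧ ∀ F : Finset ℕ, ∑ i ∈ F, s i ≤ 1

/-- The configuration `(1, 0, 0, …)`. -/
def oneConf : ℕ → ℝ := fun i => if i = 0 then 1 else 0

/-- A dislocation measure: a measure on sequences, carried by `S`, giving no mass
to `(1,0,…)`, integrating `1 - s₁`, and conserving total mass (carried by
configurations with `Σ sᵢ = 1`). -/
structure IsDislocation (ν : Measure (ℕ → ℝ)) : Prop where
  carried : ν {s | ¬ (inS s ∧ HasSum s 1)} = 0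
  no_one : ν {oneConf} = 0
  int_one_sub : ∫⁻ s, ENNReal.ofReal (1 - s 0) ∂ν < ⊤

/-- `p̲ := inf {p ∈ ℝ : ∫_S Σ_{i≥2} sᵢ^{p+1} ν(ds) < ∞}`, as an extended real
(possibly `-∞`, and `+∞` if no `p` qualifies). -/
def pLow (ν : Measure (ℕ → ℝ)) : EReal :=
  sInf {x : EReal | ∃ p : ℝ, x = (p : EReal) ∧
    ∫⁻ s, ∑' i, ENNReal.ofReal (pw (s (i + 1)) (p + 1)) ∂ν < ⊤}

/-- `Φ(q) := ∫_S (1 - Σ_{i≥1} sᵢ^{q+1}) ν(ds)`. -/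
def Phi (ν : Measure (ℕ → ℝ)) (q : ℝ) : ℝ :=
  ∫ s, (1 - ∑' i, pw (s i) (q + 1)) ∂ν

/-!
Put `G(q) = Φ(q) - (q + 1) Φ'(q)` (`phiGap`). Near any `q ∈ J` there is `p < q` with
`∫ Σᵢ sᵢ^{p+1} dν < ∞`, and `x^{y+1} |log x| ≤ x^{p+1} / (y - p)` on `[0, 1]`; this dominates the
`q`-derivative of the integrand, so `Φ` is `C¹` on `J` and `G(q) = ν(S) - ∫ Σᵢ u(q, sᵢ) dν` with
`u(q, x) = x^{q+1} (1 - (q + 1) log x)` (`gapTerm`). Since `∂_q u = -(q + 1) x^{q+1} log² x < 0`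
for `0 < x < 1`, `G` is strictly increasing. As `q ↓ 0`, Fatou's lemma gives
`liminf ∫ Σᵢ u(q, sᵢ) ≥ ∫ Σᵢ sᵢ (1 - log sᵢ) > ν(S)` (by conservation of mass and `s₁ < 1`), so
`G < 0` somewhere on `(0, ∞)`; as `q → ∞`, `0 ≤ u(q, x) ≤ 3x` and `u(q, x) → 0` give
`G(q) → ν(S) > 0` by dominated convergence. The intermediate value theorem then yields the
unique zero `p̄ > 0`.
-/

open scoped Topology ENNReal

lemma pw_zero_left (r : ℝ) : pw 0 r = 0 := if_pos rfl

lemma pw_of_pos {x : ℝ} (hx : 0 < x) (r : ℝ) : pw x r = x ^ r := if_neg hx.ne'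

lemma pw_nonneg {x : ℝ} (hx : 0 ≤ x) (r : ℝ) : 0 ≤ pw x r := by
  rcases hx.eq_or_lt with rfl | hx
  · rw [pw_zero_left]
  · rw [pw_of_pos hx]; positivity

lemma pw_one {x : ℝ} (hx : 0 ≤ x) : pw x 1 = x := by
  rcases hx.eq_or_lt with rfl | hx
  · rw [pw_zero_left]
  · rw [pw_of_pos hx, Real.rpow_one]

lemma pw_le_one {x r : ℝ} (hx : x ∈ Icc 0 1) (hr : 0 ≤ r) : pw x r ≤ 1 := by
  rcases hx.1.eq_or_lt with rfl | hx0
  · rw [pw_zero_left]; exact zero_le_one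
  · rw [pw_of_pos hx0]; exact Real.rpow_le_one hx.1 hx.2 hr

lemma pw_le_pw_of_exponent_ge {x r r' : ℝ} (hx : x ∈ Icc 0 1) (h : r ≤ r') :
    pw x r' ≤ pw x r := by
  rcases hx.1.eq_or_lt with rfl | hx0
  · simp [pw_zero_left]
  · rw [pw_of_pos hx0, pw_of_pos hx0]; exact Real.rpow_le_rpow_of_exponent_ge hx0 hx.2 h

lemma measurable_pw (r : ℝ) : Measurable fun x => pw x r :=
  Measurable.ite (measurableSet_singleton 0) measurable_const (measurable_id.pow_const r)

lemma hasDerivAt_pw {x : ℝ} (hx : 0 ≤ x) (q : ℝ) :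
    HasDerivAt (fun q => pw x (q + 1)) (pw x (q + 1) * log x) q := by
  rcases hx.eq_or_lt with rfl | hx
  · simpa only [pw_zero_left, zero_mul] using hasDerivAt_const q (0 : ℝ)
  · simp only [pw_of_pos hx]
    exact (Real.hasStrictDerivAt_const_rpow hx (q + 1)).hasDerivAt.comp_add_const q 1

lemma abs_pw_mul_log_le {x p a y : ℝ} (hx : x ∈ Icc 0 1) (hpa : p < a) (hay : a ≤ y) :
    |pw x (y + 1) * log x| ≤ (a - p)⁻¹ * pw x (p + 1) := by
  rcases hx.1.eq_or_lt with rfl | hx0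
  · simp [pw_zero_left]
  have hdecay : |x ^ (y - p) * log x| ≤ |log x * x ^ (a - p)| := by
    rw [mul_comm, abs_mul, abs_mul, abs_of_pos (Real.rpow_pos_of_pos hx0 _),
      abs_of_pos (Real.rpow_pos_of_pos hx0 _)]
    exact mul_le_mul_of_nonneg_left
      (Real.rpow_le_rpow_of_exponent_ge hx0 hx.2 (by linarith)) (abs_nonneg _)
  have hlog := Real.abs_log_mul_self_rpow_lt x _ hx0 hx.2 (sub_pos.2 hpa)
  rw [pw_of_pos hx0, pw_of_pos hx0, show y + 1 = (p + 1) + (y - p) by ring,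
    Real.rpow_add hx0, mul_assoc, abs_mul, abs_of_pos (Real.rpow_pos_of_pos hx0 _),
    mul_comm _ (x ^ _)]
  gcongr
  rw [inv_eq_one_div]
  exact hdecay.trans hlog.le

def gapTerm (q x : ℝ) : ℝ := pw x (q + 1) * (1 - (q + 1) * log x)

lemma gapTerm_eq (q x : ℝ) : gapTerm q x = pw x (q + 1) - (q + 1) * (pw x (q + 1) * log x) := by
  rw [gapTerm]; ring

lemma measurable_gapTerm (q : ℝ) : Measurable (gapTerm q) :=
  (measurable_pw _).mul (measurable_const.sub (measurable_const.mul Real.measurable_log))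

lemma gapTerm_nonneg {q x : ℝ} (hq : -1 ≤ q) (hx : x ∈ Icc 0 1) : 0 ≤ gapTerm q x :=
  mul_nonneg (pw_nonneg hx.1 _) (by nlinarith [Real.log_nonpos hx.1 hx.2])

lemma hasDerivAt_gapTerm {x : ℝ} (hx : 0 ≤ x) (q : ℝ) :
    HasDerivAt (gapTerm · x) (-((q + 1) * pw x (q + 1) * log x ^ 2)) q := by
  have hlin : HasDerivAt (fun q => 1 - (q + 1) * log x) (-log x) q := by
    simpa using (((hasDerivAt_id q).add_const 1).mul_const (log x)).const_sub 1
  exact ((hasDerivAt_pw hx q).mul hlin).congr_deriv (by ring)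

lemma continuous_gapTerm {x : ℝ} (hx : 0 ≤ x) : Continuous (gapTerm · x) :=
  continuous_iff_continuousAt.2 fun q => (hasDerivAt_gapTerm hx q).continuousAt

lemma gapTerm_antitoneOn {x : ℝ} (hx : 0 ≤ x) : AntitoneOn (gapTerm · x) (Ioi (-1)) := by
  refine antitoneOn_of_deriv_nonpos (convex_Ioi _) (continuous_gapTerm hx).continuousOn
    (fun q _ => (hasDerivAt_gapTerm hx q).differentiableAt.differentiableWithinAt) fun q hq => ?_
  rw [interior_Ioi] at hq
  rw [(hasDerivAt_gapTerm hx q).deriv, neg_nonpos]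
  have : 0 < q + 1 := by linarith [mem_Ioi.1 hq]
  have := pw_nonneg hx (q + 1)
  positivity

lemma gapTerm_strictAntiOn {x : ℝ} (hx : x ∈ Ioo 0 1) : StrictAntiOn (gapTerm · x) (Ioi (-1)) := by
  refine strictAntiOn_of_deriv_neg (convex_Ioi _) (continuous_gapTerm hx.1.le).continuousOn
    fun q hq => ?_
  rw [interior_Ioi] at hq
  rw [(hasDerivAt_gapTerm hx.1.le q).deriv, neg_lt_zero, pw_of_pos hx.1]
  exact mul_pos (mul_pos (by linarith [mem_Ioi.1 hq]) (Real.rpow_pos_of_pos hx.1 _))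
    (sq_pos_of_neg (Real.log_neg hx.1 hx.2))

lemma self_le_gapTerm_zero {x : ℝ} (hx : x ∈ Icc 0 1) : x ≤ gapTerm 0 x := by
  rw [gapTerm, zero_add, pw_one hx.1, one_mul]
  nlinarith [Real.log_nonpos hx.1 hx.2, hx.1]

lemma self_lt_gapTerm_zero {x : ℝ} (hx : x ∈ Ioo 0 1) : x < gapTerm 0 x := by
  rw [gapTerm, zero_add, pw_one hx.1.le, one_mul]
  nlinarith [Real.log_neg hx.1 hx.2, hx.1]

lemma gapTerm_le_three_mul {q x : ℝ} (hq : 1 ≤ q) (hx : x ∈ Icc 0 1) : gapTerm q x ≤ 3 * x := by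
  rcases hx.1.eq_or_lt with rfl | hx0
  · simp [gapTerm, pw_zero_left]
  have hxq : x ^ q ≤ 1 := Real.rpow_le_one hx.1 hx.2 (by linarith)
  have hlog : x ^ q * -log x ≤ 1 / q := by
    have := Real.abs_log_mul_self_rpow_lt x q hx0 hx.2 (by linarith)
    rw [abs_lt] at this
    linarith
  have hq' : (q + 1) * (1 / q) ≤ 2 := by
    rw [mul_one_div, div_le_iff₀ (by linarith)]; linarith
  calc gapTerm q x = x * (x ^ q + (q + 1) * (x ^ q * -log x)) := by
        rw [gapTerm, pw_of_pos hx0, Real.rpow_add hx0, Real.rpow_one]; ring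
    _ ≤ x * 3 := by
        gcongr
        linarith [mul_le_mul_of_nonneg_left hlog (by linarith : (0 : ℝ) ≤ q + 1)]
    _ = 3 * x := mul_comm _ _

lemma tendsto_gapTerm_atTop {x : ℝ} (hx : x ∈ Ico 0 1) :
    Tendsto (gapTerm · x) atTop (𝓝 0) := by
  rcases hx.1.eq_or_lt with rfl | hx0
  · simp only [gapTerm, pw_zero_left, zero_mul]; exact tendsto_const_nhds
  have hlog : 0 < -log x := neg_pos.2 (Real.log_neg hx0 hx.2)
  have hu : Tendsto (fun q => (q + 1) * -log x) atTop atTop :=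
    (tendsto_atTop_add_const_right _ 1 tendsto_id).atTop_mul_const hlog
  have hlim : Tendsto (fun u => Real.exp (-u) + u ^ 1 * Real.exp (-u)) atTop (𝓝 0) := by
    simpa using Real.tendsto_exp_neg_atTop_nhds_zero.add
      (Real.tendsto_pow_mul_exp_neg_atTop_nhds_zero 1)
  refine (hlim.comp hu).congr fun q => ?_
  simp only [Function.comp, gapTerm, pw_of_pos hx0, Real.rpow_def_of_pos hx0]
  ring_nf

structure IsProperPartition (s : ℕ → ℝ) : Prop where
  nonneg : ∀ i, 0 ≤ s i
  lt_one : ∀ i, s i < 1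
  hasSum : HasSum s 1
  zero_pos : 0 < s 0

namespace IsProperPartition

variable {s : ℕ → ℝ}

lemma mem_Icc (hs : IsProperPartition s) (i : ℕ) : s i ∈ Icc 0 1 :=
  ⟨hs.nonneg i, (hs.lt_one i).le⟩

lemma zero_mem_Ioo (hs : IsProperPartition s) : s 0 ∈ Ioo 0 1 :=
  ⟨hs.zero_pos, hs.lt_one 0⟩

lemma tsum_ofReal (hs : IsProperPartition s) : ∑' i, ENNReal.ofReal (s i) = 1 := by
  rw [← ENNReal.ofReal_tsum_of_nonneg hs.nonneg hs.hasSum.summable, hs.hasSum.tsum_eq,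
    ENNReal.ofReal_one]

end IsProperPartition

lemma isProperPartition_of_inS {s : ℕ → ℝ} (hS : inS s) (hsum : HasSum s 1)
    (hne : s ≠ oneConf) : IsProperPartition s := by
  obtain ⟨hnonneg, hsucc, hfin⟩ := hS
  have hanti : Antitone s := antitone_nat_of_succ_le hsucc
  have hzero_pos : 0 < s 0 := by
    by_contra! h
    have : s = 0 := funext fun i => le_antisymm ((hanti (Nat.zero_le i)).trans h) (hnonneg i)
    rw [this] at hsum
    exact one_ne_zero (hsum.unique hasSum_zero)
  have hzero_lt : s 0 < 1 := by
    refine (by simpa using hfin {0} : s 0 ≤ 1).lt_of_ne fun h => hne (funext fun i => ?_)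
    rcases eq_or_ne i 0 with rfl | hi
    · simp [oneConf, h]
    · have := hfin {0, i}
      rw [Finset.sum_pair hi.symm, h] at this
      simp only [oneConf, if_neg hi]
      linarith [hnonneg i]
  exact ⟨hnonneg, fun i => (hanti (Nat.zero_le i)).trans_lt hzero_lt, hsum, hzero_pos⟩

lemma IsDislocation.ae_isProperPartition {ν : Measure (ℕ → ℝ)} (hν : IsDislocation ν) :
    ∀ᵐ s ∂ν, IsProperPartition s := by
  have hS : ∀ᵐ s ∂ν, inS s ∧ HasSum s 1 := ae_iff.2 hν.carried
  have hne : ∀ᵐ s ∂ν, s ≠ oneConf := ae_iff.2 (by simpa using hν.no_one)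
  filter_upwards [hS, hne] with s hs hne
  exact isProperPartition_of_inS hs.1 hs.2 hne

section Series

variable {α : Type*} [MeasurableSpace α] {μ : Measure α}

lemma toReal_tsum_ofReal {ι : Type*} {f : ι → ℝ} (hf : ∀ i, 0 ≤ f i) :
    (∑' i, ENNReal.ofReal (f i)).toReal = ∑' i, f i := by
  rw [ENNReal.tsum_toReal_eq fun _ => ENNReal.ofReal_ne_top]
  exact tsum_congr fun i => ENNReal.toReal_ofReal (hf i)

lemma ae_summable_of_lintegral_tsum_ne_top {f : ℕ → α → ℝ} (hf : ∀ i, Measurable (f i))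
    (h0 : ∀ᵐ a ∂μ, ∀ i, 0 ≤ f i a) (h : ∫⁻ a, ∑' i, ENNReal.ofReal (f i a) ∂μ ≠ ⊤) :
    ∀ᵐ a ∂μ, Summable fun i => f i a := by
  filter_upwards [ae_lt_top (Measurable.tsum fun i => (hf i).ennreal_ofReal) h, h0]
    with a ha ha0
  simpa only [ENNReal.toReal_ofReal (ha0 _)] using ENNReal.summable_toReal ha.ne

lemma integrable_tsum_of_lintegral_tsum_ne_top {f : ℕ → α → ℝ} (hf : ∀ i, Measurable (f i))
    (h0 : ∀ᵐ a ∂μ, ∀ i, 0 ≤ f i a) (h : ∫⁻ a, ∑' i, ENNReal.ofReal (f i a) ∂μ ≠ ⊤) :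
    Integrable (fun a => ∑' i, f i a) μ := by
  refine (integrable_toReal_of_lintegral_ne_top
    (Measurable.tsum fun i => (hf i).ennreal_ofReal).aemeasurable h).congr ?_
  filter_upwards [h0] with a ha using toReal_tsum_ofReal ha

lemma integral_lt_integral_of_ae_lt (hμ : μ ≠ 0) {f g : α → ℝ} (hf : Integrable f μ)
    (hg : Integrable g μ) (h : ∀ᵐ a ∂μ, f a < g a) : ∫ a, f a ∂μ < ∫ a, g a ∂μ := by
  rw [← sub_pos, ← integral_sub hg hf, integral_pos_iff_support_of_nonneg_ae
    (h.mono fun _ h => (sub_pos.2 h).le) (hg.sub hf)]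
  have : Function.support (g - f) =ᵐ[μ] univ := by
    refine ae_eq_univ.2 (measure_mono_null (fun a ha => ?_) (ae_iff.1 h))
    simp_all [Function.support, sub_eq_zero]
  rw [← Pi.sub_def, measure_congr this]
  exact Measure.measure_univ_pos.2 hμ

lemma ENNReal.tsum_le_liminf_tsum {β : Type*} {l : Filter β} [l.NeBot] [l.IsCountablyGenerated]
    {f : β → ℕ → ℝ≥0∞} {g : ℕ → ℝ≥0∞} (h : ∀ i, Tendsto (f · i) l (𝓝 (g i))) :
    ∑' i, g i ≤ liminf (fun b => ∑' i, f b i) l := by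
  calc ∑' i, g i = ∑' i, liminf (f · i) l := tsum_congr fun i => (h i).liminf_eq.symm
    _ ≤ liminf (fun b => ∑' i, f b i) l := by
      simpa only [lintegral_count] using
        lintegral_liminf_le (μ := Measure.count) (u := l) fun b => measurable_of_countable (f b)

end Series

/-- The interval `J = (max(p̲, -1), ∞)`. -/
def phiDomain (ν : Measure (ℕ → ℝ)) : Set ℝ := {q | -1 < q ∧ pLow ν < (q : EReal)}

lemma ordConnected_phiDomain (ν : Measure (ℕ → ℝ)) : (phiDomain ν).OrdConnected :=
  ⟨fun _ ha _ _ _ hx => ⟨ha.1.trans_le hx.1, ha.2.trans_le (EReal.coe_le_coe_iff.2 hx.1)⟩⟩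

structure IsIntegrableExponent (ν : Measure (ℕ → ℝ)) (p : ℝ) : Prop where
  neg_one_lt : -1 < p
  ae_summable : ∀ᵐ s ∂ν, Summable fun i => pw (s i) (p + 1)
  integrable : Integrable (fun s => ∑' i, pw (s i) (p + 1)) ν

variable {ν : Measure (ℕ → ℝ)}

lemma pLow_le_zero (hν : IsDislocation ν) [IsFiniteMeasure ν] : pLow ν ≤ (0 : ℝ) := by
  refine sInf_le ⟨0, rfl, ?_⟩
  calc ∫⁻ s, ∑' i, ENNReal.ofReal (pw (s (i + 1)) (0 + 1)) ∂ν ≤ ∫⁻ _, 1 ∂ν := by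
        refine lintegral_mono_ae ?_
        filter_upwards [hν.ae_isProperPartition] with s hs
        simp_rw [zero_add, pw_one (hs.nonneg _), ← hs.tsum_ofReal]
        exact ENNReal.tsum_comp_le_tsum_of_injective (add_left_injective 1) _
    _ < ⊤ := by simp

lemma Ioi_zero_subset_phiDomain (hν : IsDislocation ν) [IsFiniteMeasure ν] :
    Ioi 0 ⊆ phiDomain ν :=
  fun q hq => ⟨by linarith [mem_Ioi.1 hq], (pLow_le_zero hν).trans_lt (EReal.coe_lt_coe_iff.2 hq)⟩

lemma tsum_ofReal_pw_le {s : ℕ → ℝ} (hs : ∀ i, s i ∈ Icc 0 1) {p₀ p : ℝ} (hp : -1 ≤ p)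
    (hp₀ : p₀ ≤ p) :
    ∑' i, ENNReal.ofReal (pw (s i) (p + 1)) ≤
      1 + ∑' i, ENNReal.ofReal (pw (s (i + 1)) (p₀ + 1)) := by
  rw [tsum_eq_zero_add' ENNReal.summable]
  exact add_le_add (ENNReal.ofReal_le_one.2 (pw_le_one (hs 0) (by linarith)))
    (ENNReal.tsum_le_tsum fun i => ENNReal.ofReal_le_ofReal
      (pw_le_pw_of_exponent_ge (hs _) (by linarith)))

lemma isIntegrableExponent_of_lintegral_lt_top (hν : IsDislocation ν) {p : ℝ} (hp : -1 < p)
    (h : ∫⁻ s, ∑' i, ENNReal.ofReal (pw (s i) (p + 1)) ∂ν < ⊤) : IsIntegrableExponent ν p := by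
  have hmeas : ∀ i, Measurable fun s : ℕ → ℝ => pw (s i) (p + 1) :=
    fun i => (measurable_pw _).comp (measurable_pi_apply i)
  have h0 : ∀ᵐ s ∂ν, ∀ i, 0 ≤ pw (s i) (p + 1) :=
    hν.ae_isProperPartition.mono fun s hs i => pw_nonneg (hs.nonneg i) _
  exact ⟨hp, ae_summable_of_lintegral_tsum_ne_top hmeas h0 h.ne,
    integrable_tsum_of_lintegral_tsum_ne_top hmeas h0 h.ne⟩

lemma exists_isIntegrableExponent_lt (hν : IsDislocation ν) [IsFiniteMeasure ν] {q : ℝ}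
    (hq : q ∈ phiDomain ν) : ∃ p < q, IsIntegrableExponent ν p := by
  -- `p₀ < q` has a finite tail moment; raising it above `-1` keeps it finite since `sᵢ ≤ 1`.
  obtain ⟨_, ⟨p₀, rfl, hp₀⟩, hp₀q⟩ := sInf_lt_iff.1 hq.2
  have hp : -1 < max p₀ ((q - 1) / 2) := lt_max_of_lt_right (by linarith [hq.1])
  refine ⟨max p₀ ((q - 1) / 2), max_lt (EReal.coe_lt_coe_iff.1 hp₀q) (by linarith [hq.1]),
    isIntegrableExponent_of_lintegral_lt_top hν hp ?_⟩
  calc ∫⁻ s, ∑' i, ENNReal.ofReal (pw (s i) (max p₀ ((q - 1) / 2) + 1)) ∂ν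
      ≤ ∫⁻ s, (1 + ∑' i, ENNReal.ofReal (pw (s (i + 1)) (p₀ + 1))) ∂ν := by
        refine lintegral_mono_ae ?_
        filter_upwards [hν.ae_isProperPartition] with s hs
        exact tsum_ofReal_pw_le hs.mem_Icc hp.le (le_max_left _ _)
    _ = ν univ + ∫⁻ s, ∑' i, ENNReal.ofReal (pw (s (i + 1)) (p₀ + 1)) ∂ν := by
        rw [lintegral_add_left measurable_const, lintegral_one]
    _ < ⊤ := ENNReal.add_lt_top.2 ⟨measure_lt_top ν univ, hp₀⟩

section Configuration

variable {s : ℕ → ℝ} {p : ℝ}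

lemma summable_of_abs_le_pw (hs : ∀ i, s i ∈ Icc 0 1) (hsum : Summable fun i => pw (s i) (p + 1))
    {g : ℝ → ℝ} {C : ℝ} (hg : ∀ x ∈ Icc 0 1, |g x| ≤ C * pw x (p + 1)) :
    Summable fun i => g (s i) :=
  (hsum.mul_left C).of_norm_bounded fun i => hg _ (hs i)

lemma norm_tsum_le_of_abs_le_pw (hs : ∀ i, s i ∈ Icc 0 1)
    (hsum : Summable fun i => pw (s i) (p + 1)) {g : ℝ → ℝ} {C : ℝ}
    (hg : ∀ x ∈ Icc 0 1, |g x| ≤ C * pw x (p + 1)) :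
    ‖∑' i, g (s i)‖ ≤ C * ∑' i, pw (s i) (p + 1) :=
  tsum_of_norm_bounded (hsum.hasSum.mul_left C) fun i => hg _ (hs i)

lemma abs_pw_le {x q : ℝ} (hx : x ∈ Icc 0 1) (hpq : p ≤ q) : |pw x (q + 1)| ≤ 1 * pw x (p + 1) := by
  rw [one_mul, abs_of_nonneg (pw_nonneg hx.1 _)]
  exact pw_le_pw_of_exponent_ge hx (by linarith)

lemma hasDerivAt_tsum_pw (hs : ∀ i, s i ∈ Icc 0 1) (hsum : Summable fun i => pw (s i) (p + 1))
    {a y : ℝ} (hpa : p < a) (hay : a < y) :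
    HasDerivAt (fun z => ∑' i, pw (s i) (z + 1)) (∑' i, pw (s i) (y + 1) * log (s i)) y :=
  hasDerivAt_tsum_of_isPreconnected (hsum.mul_left (a - p)⁻¹) isOpen_Ioi isPreconnected_Ioi
    (fun i z _ => hasDerivAt_pw (hs i).1 z) (fun i _ hz => abs_pw_mul_log_le (hs i) hpa hz.le) hay
    (summable_of_abs_le_pw hs hsum fun _ hx => abs_pw_le hx (hpa.trans hay).le) hay

lemma continuousOn_tsum_pw_mul_log (hs : ∀ i, s i ∈ Icc 0 1)
    (hsum : Summable fun i => pw (s i) (p + 1)) {a : ℝ} (hpa : p < a) :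
    ContinuousOn (fun y => ∑' i, pw (s i) (y + 1) * log (s i)) (Ioi a) :=
  continuousOn_tsum
    (fun i y _ =>
      ((hasDerivAt_pw (hs i).1 y).continuousAt.mul continuousAt_const).continuousWithinAt)
    (hsum.mul_left (a - p)⁻¹) fun i _ hy => abs_pw_mul_log_le (hs i) hpa (le_of_lt hy)

lemma tsum_gapTerm (hs : ∀ i, s i ∈ Icc 0 1) (hsum : Summable fun i => pw (s i) (p + 1))
    {q : ℝ} (hpq : p < q) :
    ∑' i, gapTerm q (s i) =
      ∑' i, pw (s i) (q + 1) - (q + 1) * ∑' i, pw (s i) (q + 1) * log (s i) := by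
  simp_rw [gapTerm_eq]
  rw [(summable_of_abs_le_pw hs hsum fun _ hx => abs_pw_le hx hpq.le).tsum_sub
    ((summable_of_abs_le_pw hs hsum fun _ hx => abs_pw_mul_log_le hx hpq le_rfl).mul_left _),
    tsum_mul_left]

lemma summable_gapTerm (hs : ∀ i, s i ∈ Icc 0 1) (hsum : Summable fun i => pw (s i) (p + 1))
    {q : ℝ} (hpq : p < q) : Summable fun i => gapTerm q (s i) := by
  simp_rw [gapTerm_eq]
  exact (summable_of_abs_le_pw hs hsum fun _ hx => abs_pw_le hx hpq.le).sub
    ((summable_of_abs_le_pw hs hsum fun _ hx => abs_pw_mul_log_le hx hpq le_rfl).mul_left _)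

lemma tsum_gapTerm_lt_tsum_gapTerm (hs : IsProperPartition s)
    (hsum : Summable fun i => pw (s i) (p + 1)) (hp : -1 < p) {q₁ q₂ : ℝ} (hpq : p < q₁)
    (hlt : q₁ < q₂) : ∑' i, gapTerm q₂ (s i) < ∑' i, gapTerm q₁ (s i) := by
  have hq₁ : q₁ ∈ Ioi (-1) := hp.trans hpq
  have hq₂ : q₂ ∈ Ioi (-1) := hp.trans (hpq.trans hlt)
  exact (summable_gapTerm hs.mem_Icc hsum (hpq.trans hlt)).tsum_lt_tsum
    (fun i => gapTerm_antitoneOn (hs.nonneg i) hq₁ hq₂ hlt.le)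
    (gapTerm_strictAntiOn hs.zero_mem_Ioo hq₁ hq₂ hlt) (summable_gapTerm hs.mem_Icc hsum hpq)

lemma one_lt_tsum_ofReal_gapTerm_zero (hs : IsProperPartition s) :
    1 < ∑' i, ENNReal.ofReal (gapTerm 0 (s i)) := by
  rw [← hs.tsum_ofReal]
  exact ENNReal.tsum_lt_tsum (i := 0) (by simp [hs.tsum_ofReal])
    (fun i => ENNReal.ofReal_le_ofReal (self_le_gapTerm_zero (hs.mem_Icc i)))
    ((ENNReal.ofReal_lt_ofReal_iff_of_nonneg (hs.nonneg 0)).2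
      (self_lt_gapTerm_zero hs.zero_mem_Ioo))

lemma tsum_gapTerm_mem_Icc (hs : IsProperPartition s) {q : ℝ} (hq : 1 ≤ q) :
    ∑' i, gapTerm q (s i) ∈ Icc 0 3 := by
  have h0 : ∀ i, 0 ≤ gapTerm q (s i) := fun i => gapTerm_nonneg (by linarith) (hs.mem_Icc i)
  have hle : ∀ i, gapTerm q (s i) ≤ 3 * s i := fun i => gapTerm_le_three_mul hq (hs.mem_Icc i)
  have h3 : Summable fun i => 3 * s i := hs.hasSum.summable.mul_left 3
  refine ⟨tsum_nonneg h0, ?_⟩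
  calc ∑' i, gapTerm q (s i) ≤ ∑' i, 3 * s i := (h3.of_nonneg_of_le h0 hle).tsum_le_tsum hle h3
    _ = 3 := by rw [tsum_mul_left, hs.hasSum.tsum_eq, mul_one]

end Configuration

lemma IsIntegrableExponent.integrable_tsum (hν : IsDislocation ν) {p : ℝ}
    (hp : IsIntegrableExponent ν p) {g : ℝ → ℝ} (hg : Measurable g) {C : ℝ}
    (hgC : ∀ x ∈ Icc 0 1, |g x| ≤ C * pw x (p + 1)) :
    Integrable (fun s => ∑' i, g (s i)) ν :=
  (hp.integrable.const_mul C).mono'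
    (Measurable.tsum fun i => hg.comp (measurable_pi_apply i)).aestronglyMeasurable
    (by filter_upwards [hν.ae_isProperPartition, hp.ae_summable] with s hs hsum
        using norm_tsum_le_of_abs_le_pw hs.mem_Icc hsum hgC)

lemma integrable_tsum_pw (hν : IsDislocation ν) [IsFiniteMeasure ν] {q : ℝ}
    (hq : q ∈ phiDomain ν) : Integrable (fun s => ∑' i, pw (s i) (q + 1)) ν := by
  obtain ⟨p, hpq, hp⟩ := exists_isIntegrableExponent_lt hν hq
  exact hp.integrable_tsum hν (measurable_pw _) fun _ hx => abs_pw_le hx hpq.le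

lemma integrable_tsum_pw_mul_log (hν : IsDislocation ν) [IsFiniteMeasure ν] {q : ℝ}
    (hq : q ∈ phiDomain ν) : Integrable (fun s => ∑' i, pw (s i) (q + 1) * log (s i)) ν := by
  obtain ⟨p, hpq, hp⟩ := exists_isIntegrableExponent_lt hν hq
  exact hp.integrable_tsum hν ((measurable_pw _).mul Real.measurable_log)
    fun _ hx => abs_pw_mul_log_le hx hpq le_rfl

lemma exists_integrable_bound_tsum_pw_mul_log (hν : IsDislocation ν) [IsFiniteMeasure ν]
    {q : ℝ} (hq : q ∈ phiDomain ν) :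
    ∃ a < q, ∃ bound : (ℕ → ℝ) → ℝ, Integrable bound ν ∧ ∀ᵐ s ∂ν,
      ContinuousOn (fun y => ∑' i, pw (s i) (y + 1) * log (s i)) (Ioi a) ∧
      ∀ y ∈ Ioi a,
        HasDerivAt (fun z => ∑' i, pw (s i) (z + 1)) (∑' i, pw (s i) (y + 1) * log (s i)) y ∧
        ‖∑' i, pw (s i) (y + 1) * log (s i)‖ ≤ bound s := by
  obtain ⟨p, hpq, hp⟩ := exists_isIntegrableExponent_lt hν hq
  have hpa : p < (p + q) / 2 := by linarith
  refine ⟨(p + q) / 2, by linarith, _, hp.integrable.const_mul ((p + q) / 2 - p)⁻¹, ?_⟩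
  filter_upwards [hν.ae_isProperPartition, hp.ae_summable] with s hs hsum
  exact ⟨continuousOn_tsum_pw_mul_log hs.mem_Icc hsum hpa, fun y hy =>
    ⟨hasDerivAt_tsum_pw hs.mem_Icc hsum hpa hy,
      norm_tsum_le_of_abs_le_pw hs.mem_Icc hsum fun _ hx => abs_pw_mul_log_le hx hpa hy.le⟩⟩

lemma measurable_tsum_pw_mul_log (y : ℝ) :
    Measurable fun s : ℕ → ℝ => ∑' i, pw (s i) (y + 1) * log (s i) :=
  Measurable.tsum fun i => ((measurable_pw _).mul Real.measurable_log).comp (measurable_pi_apply i)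

lemma hasDerivAt_phi (hν : IsDislocation ν) [IsFiniteMeasure ν] {q : ℝ}
    (hq : q ∈ phiDomain ν) :
    HasDerivAt (Phi ν) (-∫ s, ∑' i, pw (s i) (q + 1) * log (s i) ∂ν) q := by
  obtain ⟨a, haq, bound, hbound, hae⟩ := exists_integrable_bound_tsum_pw_mul_log hν hq
  rw [← integral_neg]
  refine (hasDerivAt_integral_of_dominated_loc_of_deriv_le
    (F := fun y s => 1 - ∑' i, pw (s i) (y + 1)) (Ioi_mem_nhds haq)
    (Eventually.of_forall fun y => (measurable_const.sub (Measurable.tsum fun i =>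
      (measurable_pw _).comp (measurable_pi_apply i))).aestronglyMeasurable)
    ((integrable_const 1).sub (integrable_tsum_pw hν hq))
    (measurable_tsum_pw_mul_log q).neg.aestronglyMeasurable
    (hae.mono fun s hs y hy => (norm_neg _).trans_le (hs.2 y hy).2) hbound
    (hae.mono fun s hs y hy => (hs.2 y hy).1.const_sub 1)).2

lemma continuousOn_deriv_phi (hν : IsDislocation ν) [IsFiniteMeasure ν] :
    ContinuousOn (deriv (Phi ν)) (phiDomain ν) := by
  intro q hq
  obtain ⟨a, haq, bound, hbound, hae⟩ := exists_integrable_bound_tsum_pw_mul_log hν hq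
  have hcont : ContinuousAt (fun y => ∫ s, ∑' i, pw (s i) (y + 1) * log (s i) ∂ν) q :=
    continuousAt_of_dominated
      (Eventually.of_forall fun y => (measurable_tsum_pw_mul_log y).aestronglyMeasurable)
      (eventually_of_mem (Ioi_mem_nhds haq) fun y hy => hae.mono fun s hs => (hs.2 y hy).2)
      hbound (hae.mono fun s hs => hs.1.continuousAt (Ioi_mem_nhds haq))
  exact hcont.neg.continuousWithinAt.congr (fun y hy => (hasDerivAt_phi hν hy).deriv)
    (hasDerivAt_phi hν hq).deriv

def phiGap (ν : Measure (ℕ → ℝ)) (q : ℝ) : ℝ := Phi ν q - (q + 1) * deriv (Phi ν) q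

lemma continuousOn_phiGap (hν : IsDislocation ν) [IsFiniteMeasure ν] :
    ContinuousOn (phiGap ν) (phiDomain ν) :=
  (HasDerivAt.continuousOn fun _ hq => hasDerivAt_phi hν hq).sub
    ((continuousOn_id.add continuousOn_const).mul (continuousOn_deriv_phi hν))

lemma integrable_tsum_gapTerm (hν : IsDislocation ν) [IsFiniteMeasure ν] {q : ℝ}
    (hq : q ∈ phiDomain ν) : Integrable (fun s => ∑' i, gapTerm q (s i)) ν := by
  obtain ⟨p, hpq, hp⟩ := exists_isIntegrableExponent_lt hν hq
  refine ((integrable_tsum_pw hν hq).sub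
    ((integrable_tsum_pw_mul_log hν hq).const_mul (q + 1))).congr ?_
  filter_upwards [hν.ae_isProperPartition, hp.ae_summable] with s hs hsum
  exact (tsum_gapTerm hs.mem_Icc hsum hpq).symm

lemma phiGap_eq_integral (hν : IsDislocation ν) [IsFiniteMeasure ν] {q : ℝ}
    (hq : q ∈ phiDomain ν) : phiGap ν q = ∫ s, (1 - ∑' i, gapTerm q (s i)) ∂ν := by
  obtain ⟨p, hpq, hp⟩ := exists_isIntegrableExponent_lt hν hq
  have hae : (fun s => 1 - ∑' i, gapTerm q (s i)) =ᵐ[ν] fun s =>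
      (1 - ∑' i, pw (s i) (q + 1)) + (q + 1) * ∑' i, pw (s i) (q + 1) * log (s i) := by
    filter_upwards [hν.ae_isProperPartition, hp.ae_summable] with s hs hsum
    rw [tsum_gapTerm hs.mem_Icc hsum hpq]
    ring
  have hPhi : Integrable (fun s => 1 - ∑' i, pw (s i) (q + 1)) ν :=
    (integrable_const 1).sub (integrable_tsum_pw hν hq)
  rw [integral_congr_ae hae, integral_add hPhi
    ((integrable_tsum_pw_mul_log hν hq).const_mul _), integral_const_mul, phiGap,
    (hasDerivAt_phi hν hq).deriv, Phi]
  ring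

lemma phiGap_eq_sub_integral (hν : IsDislocation ν) [IsFiniteMeasure ν] {q : ℝ}
    (hq : q ∈ phiDomain ν) : phiGap ν q = ν.real univ - ∫ s, ∑' i, gapTerm q (s i) ∂ν := by
  rw [phiGap_eq_integral hν hq, integral_sub (integrable_const 1) (integrable_tsum_gapTerm hν hq),
    integral_const, smul_eq_mul, mul_one]

lemma ofReal_integral_tsum_gapTerm (hν : IsDislocation ν) [IsFiniteMeasure ν] {q : ℝ}
    (hq : q ∈ phiDomain ν) :
    ENNReal.ofReal (∫ s, ∑' i, gapTerm q (s i) ∂ν) =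
      ∫⁻ s, ∑' i, ENNReal.ofReal (gapTerm q (s i)) ∂ν := by
  obtain ⟨p, hpq, hp⟩ := exists_isIntegrableExponent_lt hν hq
  have h0 : ∀ᵐ s ∂ν, ∀ i, 0 ≤ gapTerm q (s i) := hν.ae_isProperPartition.mono fun s hs i =>
    gapTerm_nonneg (hp.neg_one_lt.trans hpq).le (hs.mem_Icc i)
  rw [ofReal_integral_eq_lintegral_ofReal (integrable_tsum_gapTerm hν hq)
    (h0.mono fun _ hs => tsum_nonneg hs)]
  refine lintegral_congr_ae ?_
  filter_upwards [hν.ae_isProperPartition, hp.ae_summable, h0] with s hs hsum hs0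
  exact ENNReal.ofReal_tsum_of_nonneg hs0 (summable_gapTerm hs.mem_Icc hsum hpq)

lemma phiGap_strictMonoOn (hν : IsDislocation ν) [IsFiniteMeasure ν] (hν0 : ν ≠ 0) :
    StrictMonoOn (phiGap ν) (phiDomain ν) := by
  intro q₁ hq₁ q₂ hq₂ hlt
  obtain ⟨p, hpq, hp⟩ := exists_isIntegrableExponent_lt hν hq₁
  rw [phiGap_eq_sub_integral hν hq₁, phiGap_eq_sub_integral hν hq₂, sub_lt_sub_iff_left]
  refine integral_lt_integral_of_ae_lt hν0 (integrable_tsum_gapTerm hν hq₂)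
    (integrable_tsum_gapTerm hν hq₁) ?_
  filter_upwards [hν.ae_isProperPartition, hp.ae_summable] with s hs hsum
  exact tsum_gapTerm_lt_tsum_gapTerm hs hsum hp.neg_one_lt hpq hlt

lemma exists_pos_phiGap_neg (hν : IsDislocation ν) [IsFiniteMeasure ν] (hν0 : ν ≠ 0) :
    ∃ q, 0 < q ∧ phiGap ν q < 0 := by
  set F : ℝ → (ℕ → ℝ) → ℝ≥0∞ := fun q s => ∑' i, ENNReal.ofReal (gapTerm q (s i))
  have hF : ∀ q, Measurable (F q) := fun q =>
    Measurable.tsum fun i => ((measurable_gapTerm q).comp (measurable_pi_apply i)).ennreal_ofReal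
  have hzero : ν univ < ∫⁻ s, F 0 s ∂ν := by
    rw [← lintegral_one]
    exact lintegral_strict_mono hν0 (hF 0).aemeasurable (by simp)
      (hν.ae_isProperPartition.mono fun s hs => one_lt_tsum_ofReal_gapTerm_zero hs)
  have hfatou : ∫⁻ s, F 0 s ∂ν ≤ liminf (fun q => ∫⁻ s, F q s ∂ν) (𝓝[>] 0) := by
    refine (lintegral_mono_ae ?_).trans (lintegral_liminf_le hF)
    filter_upwards [hν.ae_isProperPartition] with s hs
    exact ENNReal.tsum_le_liminf_tsum fun i =>
      ((ENNReal.continuous_ofReal.comp (continuous_gapTerm (hs.nonneg i))).tendsto 0).mono_left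
        nhdsWithin_le_nhds
  obtain ⟨q, hq, hq0⟩ :=
    ((eventually_lt_of_lt_liminf (hzero.trans_le hfatou)).and self_mem_nhdsWithin).exists
  have hqJ := Ioi_zero_subset_phiDomain hν hq0
  refine ⟨q, hq0, ?_⟩
  rw [phiGap_eq_sub_integral hν hqJ, sub_neg, measureReal_def,
    ← ENNReal.lt_ofReal_iff_toReal_lt (measure_ne_top ν univ),
    ofReal_integral_tsum_gapTerm hν hqJ]
  exact hq

lemma tendsto_phiGap_atTop (hν : IsDislocation ν) [IsFiniteMeasure ν] :
    Tendsto (phiGap ν) atTop (𝓝 (ν.real univ)) := by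
  have hlim : Tendsto (fun q => ∫ s, (1 - ∑' i, gapTerm q (s i)) ∂ν) atTop
      (𝓝 (∫ _, (1 : ℝ) ∂ν)) := by
    refine tendsto_integral_filter_of_dominated_convergence (fun _ => 2)
      (Eventually.of_forall fun q => (measurable_const.sub (Measurable.tsum fun i =>
        (measurable_gapTerm q).comp (measurable_pi_apply i))).aestronglyMeasurable) ?_
      (integrable_const _) ?_
    · filter_upwards [eventually_ge_atTop 1] with q hq
      filter_upwards [hν.ae_isProperPartition] with s hs
      have := tsum_gapTerm_mem_Icc hs hq
      rw [Real.norm_eq_abs, abs_le]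
      constructor <;> linarith [this.1, this.2]
    · filter_upwards [hν.ae_isProperPartition] with s hs
      simpa using (tendsto_tsum_of_dominated_convergence (hs.hasSum.summable.mul_left 3)
        (fun i => tendsto_gapTerm_atTop ⟨hs.nonneg i, hs.lt_one i⟩)
        (by filter_upwards [eventually_ge_atTop 1] with q hq i
            rw [Real.norm_of_nonneg (gapTerm_nonneg (by linarith) (hs.mem_Icc i))]
            exact gapTerm_le_three_mul hq (hs.mem_Icc i))).const_sub 1
  rw [integral_const, smul_eq_mul, mul_one] at hlim
  refine hlim.congr' ?_
  filter_upwards [eventually_gt_atTop 0] with q hq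
  exact (phiGap_eq_integral hν (Ioi_zero_subset_phiDomain hν hq)).symm

lemma StrictMonoOn.exists_eq_zero {J : Set ℝ} {G : ℝ → ℝ} (hJ : J.OrdConnected)
    (hmono : StrictMonoOn G J) (hcont : ContinuousOn G J) {a b : ℝ} (ha : a ∈ J) (hb : b ∈ J)
    (hGa : G a < 0) (hGb : 0 < G b) :
    ∃ c ∈ J, a < c ∧ G c = 0 ∧ ∀ q ∈ J, (G q = 0 → q = c) ∧ (G q < 0 ↔ q < c) := by
  have hab : a ≤ b := ((hmono.lt_iff_lt ha hb).1 (hGa.trans hGb)).le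
  obtain ⟨c, hc, hGc⟩ :=
    intermediate_value_Icc hab (hcont.mono (hJ.out ha hb)) ⟨hGa.le, hGb.le⟩
  have hcJ : c ∈ J := hJ.out ha hb hc
  refine ⟨c, hcJ, (hmono.lt_iff_lt ha hcJ).1 (hGc ▸ hGa), hGc, fun q hq =>
    ⟨fun h => hmono.injOn hq hcJ (h.trans hGc.symm), ?_⟩⟩
  rw [← hGc]
  exact hmono.lt_iff_lt hq hcJ

/-- Assume `ν` finite and nonzero. Then `Φ` is differentiable on
`J := (max(p̲, -1), ∞)`, the equation `Φ(q) = (q+1)Φ'(q)` has a unique solution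
`p̄` in `J`, this solution satisfies `p̄ > 0`, and for every `q ∈ J` one has
`Φ(q) - (q+1)Φ'(q) < 0 ↔ q < p̄`. -/
theorem pbar_exists_unique (ν : Measure (ℕ → ℝ)) (hν : IsDislocation ν)
    [IsFiniteMeasure ν] (hν0 : ν ≠ 0) :
    (∀ q : ℝ, -1 < q → pLow ν < (q : EReal) → DifferentiableAt ℝ (Phi ν) q) ∧
      ∃ pbar : ℝ, (-1 < pbar ∧ pLow ν < (pbar : EReal)) ∧
        Phi ν pbar = (pbar + 1) * deriv (Phi ν) pbar ∧
        0 < pbar ∧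
        ∀ q : ℝ, -1 < q → pLow ν < (q : EReal) →
          (Phi ν q = (q + 1) * deriv (Phi ν) q → q = pbar) ∧
          (Phi ν q - (q + 1) * deriv (Phi ν) q < 0 ↔ q < pbar) := by
  have : NeZero ν := ⟨hν0⟩
  obtain ⟨a, ha0, hGa⟩ := exists_pos_phiGap_neg hν hν0
  obtain ⟨b, hGb, hb0⟩ := (((tendsto_phiGap_atTop hν).eventually
    (lt_mem_nhds measureReal_univ_pos)).and (eventually_gt_atTop 0)).exists
  obtain ⟨c, hc, hac, hGc, hzero⟩ := (phiGap_strictMonoOn hν hν0).exists_eq_zero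
    (ordConnected_phiDomain ν) (continuousOn_phiGap hν) (Ioi_zero_subset_phiDomain hν ha0)
    (Ioi_zero_subset_phiDomain hν hb0) hGa hGb
  refine ⟨fun q h1 h2 => (hasDerivAt_phi hν ⟨h1, h2⟩).differentiableAt, c, hc,
    sub_eq_zero.1 hGc, ha0.trans hac, fun q h1 h2 =>
      ⟨fun h => (hzero q ⟨h1, h2⟩).1 (sub_eq_zero.2 h), (hzero q ⟨h1, h2⟩).2⟩⟩
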